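/- arXiv:0907.0566 — 3 statements merged into one kernel-verified Lean document; each statement's English description precedes it below -/
import Mathlib

section
/- The map θ ↦ ‖w_θ‖_{L^∞} = w_θ(0) = c_0 ∫_θ^1 (ρ - θ^β ρ^{1-β})^{1/(p-1-q)} dρ is strictly decreasing on [0,1], with value c_0/α at θ = 0 and 0 at θ = 1. In particular, for every M ∈ [0, c_0/α] there is exactly one θ ∈ [0,1] with w_θ(0) = M. -/
open Real Set intervalIntegral

/-- The maximum value `θ ↦ w_θ(0) = c₀ ∫_θ^1 (ρ - θ^β ρ^{1-β})^{1/(p-1-q)} dρ`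
is strictly decreasing on `[0,1]`, equals `c₀/α` at `θ = 0` and `0` at `θ = 1`;
consequently every `M ∈ [0, c₀/α]` is attained for exactly one `θ ∈ [0,1]`. -/
theorem w_theta_max_strictly_decreasing (N : ℕ) (p q : ℝ) (hN : 2 ≤ N) (hp : 2 ≤ p)
    (hq0 : 0 < q) (hq : q < p - 1)
    (β : ℝ) (hβ : β = 1 + ((N : ℝ) - 1) * (p - 1 - q) / (p - 1))
    (α : ℝ) (hα : α = (p - q) / (p - 1 - q))
    (c₀ : ℝ) (hc₀ : c₀ = ((p - 1 - q) / ((p - q) * β)) ^ (1 / (p - 1 - q)))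
    (m : ℝ → ℝ)
    (hm : ∀ θ : ℝ, m θ =
      c₀ * ∫ ρ in θ..1, (ρ - θ ^ β * ρ ^ (1 - β)) ^ (1 / (p - 1 - q))) :
    StrictAntiOn m (Icc (0 : ℝ) 1) ∧
    m 0 = c₀ / α ∧
    m 1 = 0 ∧
    (∀ M ∈ Icc (0 : ℝ) (c₀ / α), ∃! θ : ℝ, θ ∈ Icc (0 : ℝ) 1 ∧ m θ = M) := by
  have hp1 : (0:ℝ) < p - 1 := by linarith
  have hpq : (0:ℝ) < p - 1 - q := by linarith
  set r : ℝ := 1 / (p - 1 - q) with hrdef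
  have hr : 0 < r := by positivity
  have hN2 : (2:ℝ) ≤ (N:ℝ) := by exact_mod_cast hN
  have hβ1 : 1 < β := by
    rw [hβ]
    have : 0 < ((N:ℝ) - 1) * (p - 1 - q) / (p - 1) := by
      apply div_pos (mul_pos (by linarith) hpq) hp1
    linarith
  have hβ0 : 0 < β := by linarith
  have hc : 0 < c₀ := by
    rw [hc₀]
    apply Real.rpow_pos_of_pos
    apply div_pos hpq (mul_pos (by linarith) hβ0)
  -- the modified integrand, defined on the whole interval [0,1]
  set F : ℝ → ℝ → ℝ := fun θ ρ => (max (ρ - θ ^ β * ρ ^ (1 - β)) 0) ^ r with hF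
  have h1β : (1:ℝ) - β ≠ 0 := by linarith
  have hFval0 : ∀ θ : ℝ, F θ 0 = 0 := by
    intro θ
    simp [hF, Real.zero_rpow h1β, Real.zero_rpow hr.ne']
  have hFnonneg : ∀ θ ρ : ℝ, 0 ≤ F θ ρ := fun θ ρ =>
    Real.rpow_nonneg (le_max_right _ _) r
  have hrhoid : ∀ ρ : ℝ, 0 < ρ → ρ ^ β * ρ ^ (1 - β) = ρ := by
    intro ρ hρ
    rw [← Real.rpow_add hρ]
    norm_num
  have hFle : ∀ θ : ℝ, 0 ≤ θ → ∀ ρ : ℝ, 0 ≤ ρ → F θ ρ ≤ ρ ^ r := by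
    intro θ hθ ρ hρ
    apply Real.rpow_le_rpow (le_max_right _ _) _ hr.le
    have h1 : 0 ≤ θ ^ β * ρ ^ (1 - β) :=
      mul_nonneg (Real.rpow_nonneg hθ _) (Real.rpow_nonneg hρ _)
    exact max_le (by linarith) hρ
  have hbase_nonneg : ∀ θ : ℝ, 0 ≤ θ → ∀ ρ : ℝ, θ ≤ ρ →
      0 ≤ ρ - θ ^ β * ρ ^ (1 - β) := by
    intro θ hθ ρ hθρ
    rcases eq_or_lt_of_le (hθ.trans hθρ) with h0 | h0
    · have hθ0 : θ = 0 := le_antisymm (hθρ.trans h0.symm.le) hθ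
      simp [← h0, hθ0, Real.zero_rpow hβ0.ne', Real.zero_rpow h1β]
    · have : θ ^ β * ρ ^ (1 - β) ≤ ρ ^ β * ρ ^ (1 - β) :=
        mul_le_mul_of_nonneg_right (Real.rpow_le_rpow hθ hθρ hβ0.le)
          (Real.rpow_nonneg h0.le _)
      rw [hrhoid ρ h0] at this
      linarith
  have hFeq : ∀ θ : ℝ, 0 ≤ θ → ∀ ρ : ℝ, θ ≤ ρ →
      F θ ρ = (ρ - θ ^ β * ρ ^ (1 - β)) ^ r := by
    intro θ hθ ρ hθρ
    rw [hF]
    simp only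
    rw [max_eq_left (hbase_nonneg θ hθ ρ hθρ)]
  have hFzero : ∀ θ : ℝ, 0 ≤ θ → ∀ ρ : ℝ, 0 ≤ ρ → ρ ≤ θ → F θ ρ = 0 := by
    intro θ hθ ρ hρ hρθ
    rcases eq_or_lt_of_le hρ with h0 | h0
    · rw [← h0]; exact hFval0 θ
    · have : ρ ^ β * ρ ^ (1 - β) ≤ θ ^ β * ρ ^ (1 - β) :=
        mul_le_mul_of_nonneg_right (Real.rpow_le_rpow hρ hρθ hβ0.le)
          (Real.rpow_nonneg hρ _)
      rw [hrhoid ρ h0] at this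
      rw [hF]
      simp only
      rw [max_eq_right (by linarith)]
      exact Real.zero_rpow hr.ne'
  -- continuity in ρ away from 0
  have hFcontAt : ∀ θ ρ : ℝ, ρ ≠ 0 → ContinuousAt (F θ) ρ := by
    intro θ ρ hρ
    exact (((continuousAt_id.sub (continuousAt_const.mul
      (Real.continuousAt_rpow_const ρ (1 - β) (Or.inl hρ)))).max
      continuousAt_const).rpow_const (Or.inr hr.le))
  have hFcont : ∀ θ : ℝ, 0 ≤ θ → ContinuousOn (F θ) (Icc (0:ℝ) 1) := by
    intro θ hθ ρ hρ
    rcases eq_or_lt_of_le hρ.1 with h0 | h0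
    · rw [ContinuousWithinAt, ← h0, hFval0 θ]
      apply squeeze_zero' (t₀ := nhdsWithin 0 (Icc (0:ℝ) 1))
        (g := fun ρ => ρ ^ r)
      · exact Filter.Eventually.of_forall fun x => hFnonneg θ x
      · filter_upwards [self_mem_nhdsWithin] with x hx
        exact hFle θ hθ x hx.1
      · have : ContinuousAt (fun x : ℝ => x ^ r) 0 :=
          Real.continuousAt_rpow_const 0 r (Or.inr hr.le)
        have h2 := this.continuousWithinAt (s := Icc (0:ℝ) 1)
        rw [ContinuousWithinAt, Real.zero_rpow hr.ne'] at h2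
        exact h2
    · exact (hFcontAt θ ρ h0.ne').continuousWithinAt
  -- the key splitting: on [0,1], m θ = c₀ * ∫_0^1 F θ
  have hsplit : ∀ θ ∈ Icc (0:ℝ) 1, m θ = c₀ * ∫ ρ in (0:ℝ)..1, F θ ρ := by
    intro θ hθ
    rw [hm θ]
    congr 1
    have hi1 : IntervalIntegrable (F θ) MeasureTheory.volume 0 θ := by
      apply ContinuousOn.intervalIntegrable
      apply (hFcont θ hθ.1).mono
      rw [uIcc_of_le hθ.1]
      exact Icc_subset_Icc le_rfl hθ.2
    have hi2 : IntervalIntegrable (F θ) MeasureTheory.volume θ 1 := by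
      apply ContinuousOn.intervalIntegrable
      apply (hFcont θ hθ.1).mono
      rw [uIcc_of_le hθ.2]
      exact Icc_subset_Icc hθ.1 le_rfl
    have hzero : (∫ ρ in (0:ℝ)..θ, F θ ρ) = 0 := by
      have heq0 : (∫ ρ in (0:ℝ)..θ, F θ ρ) = ∫ ρ in (0:ℝ)..θ, (0:ℝ) := by
        apply intervalIntegral.integral_congr
        intro ρ hρ
        rw [uIcc_of_le hθ.1] at hρ
        exact hFzero θ hθ.1 ρ hρ.1 hρ.2
      rw [heq0, intervalIntegral.integral_zero]
    have hadd := intervalIntegral.integral_add_adjacent_intervals hi1 hi2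
    have heqF : (∫ ρ in θ..1, (ρ - θ ^ β * ρ ^ (1 - β)) ^ r) = ∫ ρ in θ..1, F θ ρ := by
      apply intervalIntegral.integral_congr
      intro ρ hρ
      rw [uIcc_of_le hθ.2] at hρ
      exact (hFeq θ hθ.1 ρ hρ.1).symm
    rw [heqF, ← hadd, hzero, zero_add]
  -- strict antitonicity
  have hanti : StrictAntiOn m (Icc (0:ℝ) 1) := by
    intro θ₁ h₁ θ₂ h₂ hlt
    rw [hsplit θ₁ h₁, hsplit θ₂ h₂]
    apply mul_lt_mul_of_pos_left _ hc
    apply intervalIntegral.integral_lt_integral_of_continuousOn_of_le_of_exists_lt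
      zero_lt_one (hFcont θ₂ h₂.1) (hFcont θ₁ h₁.1)
    · intro ρ hρ
      apply Real.rpow_le_rpow (le_max_right _ _) _ hr.le
      have h1 : θ₁ ^ β * ρ ^ (1 - β) ≤ θ₂ ^ β * ρ ^ (1 - β) :=
        mul_le_mul_of_nonneg_right (Real.rpow_le_rpow h₁.1 hlt.le hβ0.le)
          (Real.rpow_nonneg hρ.1.le _)
      exact max_le_max (by linarith) le_rfl
    · refine ⟨1, ⟨zero_le_one, le_rfl⟩, ?_⟩
      have h1 : θ₁ ^ β < θ₂ ^ β := Real.rpow_lt_rpow h₁.1 hlt hβ0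
      have h2 : θ₂ ^ β ≤ 1 := Real.rpow_le_one (h₁.1.trans hlt.le) h₂.2 hβ0.le
      have h3 : (1:ℝ) ^ (1 - β) = 1 := Real.one_rpow _
      rw [hF]
      simp only [h3, mul_one]
      rw [max_eq_left (by linarith), max_eq_left (by linarith)]
      exact Real.rpow_lt_rpow (by linarith) (by linarith) hr
  -- value at 0
  have hm0 : m 0 = c₀ / α := by
    rw [hm 0]
    have : (fun ρ : ℝ => (ρ - 0 ^ β * ρ ^ (1 - β)) ^ r) = fun ρ : ℝ => ρ ^ r := by
      funext ρ
      rw [Real.zero_rpow hβ0.ne', zero_mul, sub_zero]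
    rw [show (∫ ρ in (0:ℝ)..1, (ρ - 0 ^ β * ρ ^ (1 - β)) ^ r) = ∫ ρ in (0:ℝ)..1, ρ ^ r
      from by rw [this]]
    have hαr : α = r + 1 := by
      rw [hα, hrdef]
      field_simp
      ring
    rw [integral_rpow (Or.inl (by linarith : (-1:ℝ) < r))]
    rw [Real.one_rpow, Real.zero_rpow (by positivity : r + 1 ≠ 0), hαr]
    rw [sub_zero, mul_one_div]
  -- value at 1
  have hm1 : m 1 = 0 := by
    rw [hm 1, intervalIntegral.integral_same, mul_zero]
  -- continuity of m on [0,1]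
  have hcont : ContinuousOn m (Icc (0:ℝ) 1) := by
    apply ContinuousOn.congr (f := fun θ => c₀ * ∫ ρ in (0:ℝ)..1, F θ ρ)
    · intro θ₀ hθ₀
      apply ContinuousWithinAt.mul continuousWithinAt_const
      apply intervalIntegral.continuousWithinAt_of_dominated_interval
        (bound := fun _ => (1:ℝ))
      · filter_upwards with θ
        apply ContinuousOn.aestronglyMeasurable _ measurableSet_uIoc
        intro ρ hρ
        rw [uIoc_of_le zero_le_one] at hρ
        exact (hFcontAt θ ρ hρ.1.ne').continuousWithinAt
      · filter_upwards [self_mem_nhdsWithin] with θ hθ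
        apply MeasureTheory.ae_of_all
        intro ρ hρ
        rw [uIoc_of_le zero_le_one] at hρ
        rw [Real.norm_eq_abs, abs_of_nonneg (hFnonneg θ ρ)]
        calc F θ ρ ≤ ρ ^ r := hFle θ hθ.1 ρ hρ.1.le
          _ ≤ 1 := Real.rpow_le_one hρ.1.le hρ.2 hr.le
      · exact intervalIntegrable_const
      · apply MeasureTheory.ae_of_all
        intro ρ hρ
        rw [uIoc_of_le zero_le_one] at hρ
        apply ContinuousAt.continuousWithinAt
        exact (((continuousAt_const.sub
          ((Real.continuousAt_rpow_const θ₀ β (Or.inr hβ0.le)).mul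
            continuousAt_const)).max continuousAt_const).rpow_const (Or.inr hr.le))
    · intro θ hθ
      exact hsplit θ hθ
  refine ⟨hanti, hm0, hm1, ?_⟩
  intro M hM
  have hM' : M ∈ Icc (m 1) (m 0) := by rw [hm0, hm1]; exact hM
  obtain ⟨θ, hθ, hmθ⟩ := intermediate_value_Icc' zero_le_one hcont hM'
  refine ⟨θ, ⟨hθ, hmθ⟩, ?_⟩
  intro θ' ⟨hθ', hmθ'⟩
  exact hanti.injOn hθ' hθ (hmθ'.trans hmθ.symm)
end

section
/- If w is a C^2 solution on an interval (θ,1) of the ODE -(p-1)|w'|^{p-2}w'' - ((N-1)/r)|w'|^{p-2}w' - |w'|^q = 0 with w' < 0 on (θ,1), then there is a constant γ ∈ ℝ such that r^{β-1} χ(w'(r)) + r^β/β = γ for all r ∈ (θ,1), where χ(z) := ((p-1)/(p-1-q)) |z|^{p-2-q} z. -/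
open Real Set

/-!
With `v = -w' > 0` the equation reads `(p-1) v^{p-2} v' + ((N-1)/r) v^{p-1} = v^q`, and
`r^{β-1} χ(w') = -((p-1)/(p-1-q)) r^{β-1} v^{p-1-q}`. For the exponent
`β - 1 = (N-1)(p-1-q)/(p-1)` the derivative of `r^{β-1} χ(w') + r^β/β` is exactly
`-r^{β-1} v^{-q}` times the equation, so it vanishes and the expression is constant on the
interval.
-/

theorem sign_mul_abs_rpow_of_neg {z : ℝ} (hz : z < 0) (s : ℝ) :
    Real.sign z * |z| ^ s = -(-z) ^ s := by
  rw [Real.sign_of_neg hz, abs_of_neg hz]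
  ring

theorem HasDerivAt.rpow_mul_rpow {v : ℝ → ℝ} {v' r : ℝ} (hv : HasDerivAt v v' r)
    (hr : 0 < r) (hvr : 0 < v r) (a b : ℝ) :
    HasDerivAt (fun x => x ^ b * v x ^ a)
      (r ^ (b - 1) * v r ^ (a - 1) * (b * v r + a * r * v')) r := by
  refine ((hasDerivAt_rpow_const (p := b) (Or.inl hr.ne')).mul
    (hv.rpow_const (p := a) (Or.inl hvr.ne'))).congr_deriv ?_
  rw [rpow_sub_one hr.ne', rpow_sub_one hvr.ne']
  field_simp

theorem hasDerivAt_radial_firstIntegral {p q k β : ℝ} {v : ℝ → ℝ} {v' r : ℝ}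
    (hv : HasDerivAt v v' r) (hr : 0 < r) (hvr : 0 < v r)
    (hpq : p - 1 - q ≠ 0) (hβ : (β - 1) * (p - 1) = k * (p - 1 - q)) (hβ0 : β ≠ 0)
    (hode : (p - 1) * v r ^ (p - 2) * v' + k / r * v r ^ (p - 2) * v r = v r ^ q) :
    HasDerivAt (fun x => -((p - 1) / (p - 1 - q)) * (x ^ (β - 1) * v x ^ (p - 1 - q))
      + x ^ β / β) 0 r := by
  set c := (p - 1) / (p - 1 - q)
  refine (((hv.rpow_mul_rpow hr hvr (p - 1 - q) (β - 1)).const_mul (-c)).add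
      ((hasDerivAt_rpow_const (p := β) (Or.inl hr.ne')).div_const β)).congr_deriv ?_
  have hc : c * (p - 1 - q) = p - 1 := div_mul_cancel₀ _ hpq
  have hcβ : c * (β - 1) = k := by
    rw [div_mul_eq_mul_div, mul_comm, hβ, mul_div_cancel_right₀ _ hpq]
  have hv1 : v r ^ (p - 1 - q - 1) * v r ^ q = v r ^ (p - 2) := by
    rw [← rpow_add hvr]; ring_nf
  have hr1 : r ^ (β - 1 - 1) * r = r ^ (β - 1) := by
    rw [← rpow_add_one hr.ne']; ring_nf
  have hode' : (p - 1) * v r ^ (p - 2) * v' * r + k * v r ^ (p - 2) * v r = v r ^ q * r := by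
    rw [← hode]; field_simp
  rw [mul_div_cancel_left₀ _ hβ0]
  refine mul_right_cancel₀ (mul_ne_zero (rpow_pos_of_pos hvr q).ne' hr.ne') ?_
  linear_combination
    (-c * ((β - 1) * v r + (p - 1 - q) * r * v') * r ^ (β - 1 - 1) * r) * hv1
    + (-c * v r ^ (p - 2) * ((β - 1) * v r + (p - 1 - q) * r * v')) * hr1
    - r ^ (β - 1) * v r ^ (p - 2) * v r * hcβ - r ^ (β - 1) * v r ^ (p - 2) * r * v' * hc
    - r ^ (β - 1) * hode'

theorem first_integral_of_ODE_general (N : ℕ) (p q : ℝ) (hN : 2 ≤ N) (hp : 2 ≤ p)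
    (hq : q < p - 1)
    (β : ℝ) (hβ : β = 1 + ((N : ℝ) - 1) * (p - 1 - q) / (p - 1))
    (χ : ℝ → ℝ)
    (hχ : ∀ z : ℝ, χ z = ((p - 1) / (p - 1 - q)) * Real.sign z * |z| ^ (p - 1 - q))
    (θ : ℝ) (hθ : θ ∈ Ico (0 : ℝ) 1)
    (w' w'' : ℝ → ℝ)
    (hd2 : ∀ r ∈ Ioo θ 1, HasDerivAt w' (w'' r) r)
    (hneg : ∀ r ∈ Ioo θ 1, w' r < 0)
    (hode : ∀ r ∈ Ioo θ 1,
      -(p - 1) * |w' r| ^ (p - 2) * w'' r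
        - (((N : ℝ) - 1) / r) * |w' r| ^ (p - 2) * w' r - |w' r| ^ q = 0) :
    ∃ γ : ℝ, ∀ r ∈ Ioo θ 1, r ^ (β - 1) * χ (w' r) + r ^ β / β = γ := by
  have hp1 : 0 < p - 1 := by linarith
  have hpq : p - 1 - q ≠ 0 := by linarith
  have hβ1 : (β - 1) * (p - 1) = ((N : ℝ) - 1) * (p - 1 - q) := by
    rw [hβ]; field_simp; ring
  have hβ0 : β ≠ 0 := by
    have : (1 : ℝ) ≤ N - 1 := by
      have : (2 : ℝ) ≤ N := by exact_mod_cast hN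
      linarith
    rw [hβ]; positivity
  have hderiv : ∀ r ∈ Ioo θ 1,
      HasDerivAt (fun x => x ^ (β - 1) * χ (w' x) + x ^ β / β) 0 r := by
    intro r hr
    have hχw : ∀ᶠ x in nhds r, x ^ (β - 1) * χ (w' x) + x ^ β / β =
        -((p - 1) / (p - 1 - q)) * (x ^ (β - 1) * (-w' x) ^ (p - 1 - q)) + x ^ β / β := by
      filter_upwards [isOpen_Ioo.mem_nhds hr] with x hx
      rw [hχ, mul_assoc _ (Real.sign _), sign_mul_abs_rpow_of_neg (hneg x hx)]
      ring
    refine (hasDerivAt_radial_firstIntegral (hd2 r hr).neg (hθ.1.trans_lt hr.1)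
      (neg_pos.2 (hneg r hr)) hpq hβ1 hβ0 ?_).congr_of_eventuallyEq hχw
    have hode_r := hode r hr
    rw [abs_of_neg (hneg r hr)] at hode_r
    simp only [Pi.neg_apply]
    linear_combination hode_r
  exact isOpen_Ioo.exists_is_const_of_deriv_eq_zero isPreconnected_Ioo
    (fun r hr => (hderiv r hr).differentiableAt.differentiableWithinAt)
    (fun r hr => (hderiv r hr).deriv)

/-- First integral of the stationary ODE: if `w` is `C²` on `(θ,1)` with
`w' < 0` solving `-(p-1)|w'|^{p-2}w'' - ((N-1)/r)|w'|^{p-2}w' - |w'|^q = 0`,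
then `r^{β-1} χ(w'(r)) + r^β/β` is constant on `(θ,1)`, where
`χ(z) = ((p-1)/(p-1-q)) sign(z) |z|^{p-1-q}`. -/
theorem first_integral_of_ODE (N : ℕ) (p q : ℝ) (hN : 2 ≤ N) (hp : 2 ≤ p)
    (hq0 : 0 < q) (hq : q < p - 1)
    (β : ℝ) (hβ : β = 1 + ((N : ℝ) - 1) * (p - 1 - q) / (p - 1))
    (χ : ℝ → ℝ)
    (hχ : ∀ z : ℝ, χ z = ((p - 1) / (p - 1 - q)) * Real.sign z * |z| ^ (p - 1 - q))
    (θ : ℝ) (hθ : θ ∈ Ico (0 : ℝ) 1)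
    (w w' w'' : ℝ → ℝ)
    (hd1 : ∀ r ∈ Ioo θ 1, HasDerivAt w (w' r) r)
    (hd2 : ∀ r ∈ Ioo θ 1, HasDerivAt w' (w'' r) r)
    (hcont : ContinuousOn w'' (Ioo θ 1))
    (hneg : ∀ r ∈ Ioo θ 1, w' r < 0)
    (hode : ∀ r ∈ Ioo θ 1,
      -(p - 1) * |w' r| ^ (p - 2) * w'' r
        - (((N : ℝ) - 1) / r) * |w' r| ^ (p - 2) * w' r - |w' r| ^ q = 0) :
    ∃ γ : ℝ, ∀ r ∈ Ioo θ 1, r ^ (β - 1) * χ (w' r) + r ^ β / β = γ :=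
  first_integral_of_ODE_general N p q hN hp hq β hβ χ hχ θ hθ w' w'' hd2 hneg hode
end

section
/- Let A_0 > 0 satisfy A_0^{p-1-q} ≥ 2. Then for every ε ∈ (0, A_0/√3) with A_0 < ε^{-1/2}, and for every r ∈ (0,1], one has ((N-1)/r)(ε² + A_0²)^{(p-2)/2} A_0 - (ε² + A_0²)^{q/2} + ε^q ≥ (1/2)(ε² + A_0²)^{(p-1)/2} - (ε² + A_0²)^{q/2} ≥ 0. In particular, ψ(r) := A_0(1-r) is a supersolution of the regularized radial equation. -/
open Real Set

/-! Write `S = ε² + A₀²`. Since `A₀² ≤ S`, the hypothesis `A₀^{p-1-q} ≥ 2` gives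
`S^{(p-1-q)/2} ≥ 2`, i.e. `S^{(p-1)/2} ≥ 2 S^{q/2}`. Since `ε < A₀/√3` we have
`√S ≤ 2A₀`, so `S^{(p-1)/2} = S^{(p-2)/2} √S ≤ 2A₀ S^{(p-2)/2}`; together with
`(N-1)/r ≥ 1` and `ε^q ≥ 0` this gives the first inequality. -/

lemma rpow_le_rpow_div_two_of_sq_le {a S t : ℝ} (ha : 0 ≤ a) (haS : a ^ 2 ≤ S) (ht : 0 ≤ t) :
    a ^ t ≤ S ^ (t / 2) := by
  calc a ^ t = (a ^ 2) ^ (t / 2) := by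
        rw [← rpow_natCast, ← rpow_mul ha]; ring_nf
    _ ≤ S ^ (t / 2) := rpow_le_rpow (by positivity) haS (by linarith)

lemma two_mul_rpow_div_two_le_of_two_le_rpow_sub {a S p q : ℝ} (hS : 0 < S) (ha : 0 ≤ a)
    (haS : a ^ 2 ≤ S) (hqp : q ≤ p) (h2 : 2 ≤ a ^ (p - q)) :
    2 * S ^ (q / 2) ≤ S ^ (p / 2) := by
  have hsplit : S ^ (p / 2) = S ^ ((p - q) / 2) * S ^ (q / 2) := by
    rw [← rpow_add hS]; ring_nf
  rw [hsplit]
  gcongr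
  exact h2.trans (rpow_le_rpow_div_two_of_sq_le ha haS (by linarith))

lemma rpow_div_two_le_of_le_sq {S b : ℝ} (hS : 0 < S) (hb : 0 ≤ b) (h : S ≤ b ^ 2) (s : ℝ) :
    S ^ (s / 2) ≤ S ^ ((s - 1) / 2) * b := by
  have hsplit : S ^ (s / 2) = S ^ ((s - 1) / 2) * √S := by
    rw [sqrt_eq_rpow, ← rpow_add hS]; ring_nf
  rw [hsplit]
  gcongr
  exact sqrt_le_iff.mpr ⟨hb, h⟩

lemma three_mul_sq_lt_of_lt_div_sqrt_three {ε A : ℝ} (hε : 0 ≤ ε) (h : ε < A / √3) :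
    3 * ε ^ 2 < A ^ 2 := by
  have := pow_lt_pow_left₀ h hε two_ne_zero
  rw [div_pow, sq_sqrt (by norm_num)] at this
  linarith

theorem barrier_supersolution_inequality_general (N : ℕ) (p q : ℝ) (hN : 2 ≤ N)
    (hq : q < p - 1)
    (A₀ : ℝ) (hA₀ : 0 < A₀) (hA₀2 : 2 ≤ A₀ ^ (p - 1 - q))
    (ε : ℝ) (hε : ε ∈ Ioo (0 : ℝ) (A₀ / Real.sqrt 3))
    (r : ℝ) (hr : r ∈ Ioc (0 : ℝ) 1) :
    (((N : ℝ) - 1) / r) * (ε ^ 2 + A₀ ^ 2) ^ ((p - 2) / 2) * A₀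
        - (ε ^ 2 + A₀ ^ 2) ^ (q / 2) + ε ^ q
      ≥ (1 / 2) * (ε ^ 2 + A₀ ^ 2) ^ ((p - 1) / 2) - (ε ^ 2 + A₀ ^ 2) ^ (q / 2) ∧
    (1 / 2) * (ε ^ 2 + A₀ ^ 2) ^ ((p - 1) / 2) - (ε ^ 2 + A₀ ^ 2) ^ (q / 2) ≥ 0 := by
  obtain ⟨hε0, hεA₀⟩ := hε
  obtain ⟨hr0, hr1⟩ := hr
  set S := ε ^ 2 + A₀ ^ 2
  have hS : 0 < S := by positivity
  have hε_sq := three_mul_sq_lt_of_lt_div_sqrt_three hε0.le hεA₀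
  have hNr : 1 ≤ ((N : ℝ) - 1) / r := by
    rw [le_div_iff₀ hr0]
    have : (2 : ℝ) ≤ N := by exact_mod_cast hN
    linarith
  have hlower := two_mul_rpow_div_two_le_of_two_le_rpow_sub hS hA₀.le
    (by nlinarith) hq.le hA₀2
  have hupper := rpow_div_two_le_of_le_sq hS (by positivity : 0 ≤ 2 * A₀) (by nlinarith) (p - 1)
  rw [show (p - 1 - 1) / 2 = (p - 2) / 2 by ring] at hupper
  have hradial : S ^ ((p - 2) / 2) * A₀ ≤ ((N : ℝ) - 1) / r * S ^ ((p - 2) / 2) * A₀ := by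
    rw [mul_assoc]
    exact le_mul_of_one_le_left (by positivity) hNr
  have hεq : 0 < ε ^ q := rpow_pos_of_pos hε0 q
  constructor <;> linarith

/-- The linear barrier computation: if `A₀^{p-1-q} ≥ 2`, then for every
`ε ∈ (0, A₀/√3)` with `A₀ < ε^{-1/2}` and every `r ∈ (0,1]`,
`((N-1)/r)(ε²+A₀²)^{(p-2)/2} A₀ - (ε²+A₀²)^{q/2} + ε^q
  ≥ (1/2)(ε²+A₀²)^{(p-1)/2} - (ε²+A₀²)^{q/2} ≥ 0`,
so `ψ(r) = A₀(1-r)` is a supersolution of the regularized radial equation. -/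
theorem barrier_supersolution_inequality (N : ℕ) (p q : ℝ) (hN : 2 ≤ N)
    (hp : 2 ≤ p) (hq0 : 0 < q) (hq : q < p - 1)
    (A₀ : ℝ) (hA₀ : 0 < A₀) (hA₀2 : 2 ≤ A₀ ^ (p - 1 - q))
    (ε : ℝ) (hε : ε ∈ Ioo (0 : ℝ) (A₀ / Real.sqrt 3)) (hεA : A₀ < ε ^ (-(1/2) : ℝ))
    (r : ℝ) (hr : r ∈ Ioc (0 : ℝ) 1) :
    (((N : ℝ) - 1) / r) * (ε ^ 2 + A₀ ^ 2) ^ ((p - 2) / 2) * A₀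
        - (ε ^ 2 + A₀ ^ 2) ^ (q / 2) + ε ^ q
      ≥ (1 / 2) * (ε ^ 2 + A₀ ^ 2) ^ ((p - 1) / 2) - (ε ^ 2 + A₀ ^ 2) ^ (q / 2) ∧
    (1 / 2) * (ε ^ 2 + A₀ ^ 2) ^ ((p - 1) / 2) - (ε ^ 2 + A₀ ^ 2) ^ (q / 2) ≥ 0 :=
  barrier_supersolution_inequality_general N p q hN hq A₀ hA₀ hA₀2 ε hε r hr
end
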